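/- Let n ≥ 1 and consider Dyck-type lattice paths in an n×n grid (from top-left to bottom-right with unit right/down steps, staying weakly above the diagonal). Mark each unit square lying in an even-indexed column and odd-indexed row with an X. Then the number of such paths with even area above the path that touch two edges of some X-marked square equals the number of such paths with odd area above the path that touch two edges of some X-marked square; i.e., the involution toggling the first doubly-touched X-square is a sign-reversing involution on this set of paths. -/

import Mathlib

/-- Dyck-type lattice paths in an `n × n` grid: `2n` steps (`true` = unit right step,
`false` = unit down step), exactly `n` right steps, every prefix having at least as many
right steps as down steps (the path stays weakly above the main diagonal, going from the
top-left corner to the bottom-right corner). -/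
def dyckSet (n : ℕ) : Finset (Fin (2 * n) → Bool) :=
  Finset.univ.filter (fun f =>
    (Finset.univ.filter (fun i => f i = true)).card = n ∧
    ∀ k : Fin (2 * n),
      (Finset.univ.filter (fun i => i ≤ k ∧ f i = false)).card ≤
        (Finset.univ.filter (fun i => i ≤ k ∧ f i = true)).card)

/-- The area above the path: the number of unit squares strictly above it, i.e. the number
of pairs (down step, later right step). -/
def areaAbove {n : ℕ} (f : Fin (2 * n) → Bool) : ℕ :=
  (Finset.univ.filter
    (fun p : Fin (2 * n) × Fin (2 * n) => p.1 < p.2 ∧ f p.1 = false ∧ f p.2 = true)).card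

/-- The lattice point (x = number of right steps so far, y = number of down steps so far)
at which step `k` of the path starts; the top-left corner is `(0, 0)`. -/
def pathPoint {n : ℕ} (f : Fin (2 * n) → Bool) (k : Fin (2 * n)) : ℕ × ℕ :=
  ((Finset.univ.filter (fun u : Fin (2 * n) => u < k ∧ f u = true)).card,
   (Finset.univ.filter (fun u : Fin (2 * n) => u < k ∧ f u = false)).card)

/-- The four unit edges of the square in column `i`, row `j` (both 1-indexed), each encoded
as (starting lattice point, direction: `true` = rightward, `false` = downward):
top, bottom, left and right edges. -/
def squareEdges (i j : ℕ) : Finset ((ℕ × ℕ) × Bool) :=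
  {((i - 1, j - 1), true), ((i - 1, j), true), ((i - 1, j - 1), false), ((i, j - 1), false)}

/-- The path `f` touches at least two of the four edges of the square in column `i`,
row `j`. -/
def TouchesTwo {n : ℕ} (f : Fin (2 * n) → Bool) (i j : ℕ) : Prop :=
  2 ≤ (Finset.univ.filter
        (fun k : Fin (2 * n) => (pathPoint f k, f k) ∈ squareEdges i j)).card

instance {n : ℕ} (f : Fin (2 * n) → Bool) (i j : ℕ) : Decidable (TouchesTwo f i j) :=
  inferInstanceAs (Decidable (2 ≤ _))

/-- The path `f` touches two edges of some X-marked square, where the X-marked squares are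
those in an even-indexed column and odd-indexed row (columns and rows 1-indexed). -/
def TouchesXSquare (n : ℕ) (f : Fin (2 * n) → Bool) : Prop :=
  ∃ i ∈ Finset.Icc 1 n, ∃ j ∈ Finset.Icc 1 n, Even i ∧ Odd j ∧ TouchesTwo f i j

instance (n : ℕ) (f : Fin (2 * n) → Bool) : Decidable (TouchesXSquare n f) := by
  unfold TouchesXSquare; infer_instance

/-!
A path touching two edges of an X-marked square does so in two consecutive steps `a`, `a + 1`
that start at the square's top-left corner, a lattice point `(x, y)` with `x` odd and `y` even,
and turn there (right-down or down-right). Swapping these two steps at the first such corner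
changes the area by exactly one, keeps the path weakly above the diagonal (as `x > y`), and
creates no earlier corner, because corners start at odd indices `x + y`; so it is a
sign-reversing involution.
-/

open Finset

theorem Finset.card_filter_and_eq_card_filter_and_not_of_involution {α : Type*} {s : Finset α}
    {p q : α → Prop} [DecidablePred p] [DecidablePred q] (g : α → α)
    (hg : ∀ x ∈ s, p x → g x ∈ s ∧ p (g x) ∧ (q (g x) ↔ ¬q x) ∧ g (g x) = x) :
    #{x ∈ s | p x ∧ q x} = #{x ∈ s | p x ∧ ¬q x} := by
  refine card_nbij' g g ?_ ?_ ?_ ?_ <;> intro x hx <;>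
    simp only [mem_coe, mem_filter] at hx ⊢ <;>
    obtain ⟨hs, hp, hq⟩ := hx <;> obtain ⟨hgs, hgp, hgq, hgg⟩ := hg x hs hp
  · exact ⟨hgs, hgp, fun h => hgq.mp h hq⟩
  · exact ⟨hgs, hgp, hgq.mpr hq⟩
  · exact hgg
  · exact hgg

namespace LatticePath

variable {m : ℕ}

def stepsBefore (f : Fin m → Bool) (c : Bool) (u : Fin m) : ℕ := #{v | v < u ∧ f v = c}

def stepsUpTo (f : Fin m → Bool) (c : Bool) (u : Fin m) : ℕ := #{v | v ≤ u ∧ f v = c}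

lemma pathPoint_eq {n : ℕ} (f : Fin (2 * n) → Bool) (u : Fin (2 * n)) :
    pathPoint f u = (stepsBefore f true u, stepsBefore f false u) := rfl

lemma mem_dyckSet {n : ℕ} {f : Fin (2 * n) → Bool} :
    f ∈ dyckSet n ↔ #{v | f v = true} = n ∧ ∀ u, stepsUpTo f false u ≤ stepsUpTo f true u := by
  simp only [dyckSet, mem_filter, mem_univ, true_and, stepsUpTo]

lemma stepsBefore_true_add_false (f : Fin m → Bool) (u : Fin m) :
    stepsBefore f true u + stepsBefore f false u = u := by
  rw [stepsBefore, stepsBefore, ← Fin.card_Iio, ← card_filter_add_card_filter_not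
    (s := Iio u) (p := fun v => f v = true)]
  congr 2 <;> ext v <;> simp

lemma stepsUpTo_eq (f : Fin m → Bool) (c : Bool) (u : Fin m) :
    stepsUpTo f c u = stepsBefore f c u + if f u = c then 1 else 0 := by
  rw [stepsUpTo, stepsBefore, ← card_filter_add_card_filter_not (p := fun v => v ≠ u)]
  congr 1
  · congr 1; ext v; simp [lt_iff_le_and_ne, and_right_comm]
  · split_ifs with h
    · rw [card_eq_one]; exact ⟨u, by ext v; simp +contextual [h]⟩
    · rw [card_eq_zero]; ext v; simp only [mem_filter]; grind

lemma stepsBefore_eq_stepsUpTo (f : Fin m → Bool) (c : Bool) {a b : Fin m}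
    (hab : b.val = a.val + 1) : stepsBefore f c b = stepsUpTo f c a := by
  simp only [stepsBefore, stepsUpTo, Fin.lt_def, Fin.le_def, hab, Nat.lt_succ_iff]

lemma stepsBefore_succ (f : Fin m → Bool) (c : Bool) {a b : Fin m} (hab : b.val = a.val + 1) :
    stepsBefore f c b = stepsBefore f c a + if f a = c then 1 else 0 := by
  rw [stepsBefore_eq_stepsUpTo f c hab, stepsUpTo_eq]

section Swap

variable (f : Fin m → Bool) {a b : Fin m}

lemma comp_swap_comp_swap : (f ∘ Equiv.swap a b) ∘ Equiv.swap a b = f := by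
  ext; simp

lemma stepsBefore_comp_swap (c : Bool) {u : Fin m} (ha : u ≤ a) (hb : u ≤ b) :
    stepsBefore (f ∘ Equiv.swap a b) c u = stepsBefore f c u := by
  refine congrArg card (filter_congr fun v _ => and_congr_right fun hv => ?_)
  rw [Function.comp_apply, Equiv.swap_apply_of_ne_of_ne (hv.trans_le ha).ne (hv.trans_le hb).ne]

lemma stepsUpTo_comp_swap (hab : b.val = a.val + 1) (c : Bool) {u : Fin m} (hu : u ≠ a) :
    stepsUpTo (f ∘ Equiv.swap a b) c u = stepsUpTo f c u := by
  refine card_equiv (Equiv.swap a b) fun v => ?_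
  have hle : Equiv.swap a b v ≤ u ↔ v ≤ u := by
    rw [Ne, Fin.ext_iff] at hu
    simp only [Equiv.swap_apply_def, Fin.le_def, Fin.ext_iff]
    split_ifs <;> omega
  simp [hle]

lemma swap_lt_swap_iff (hab : b.val = a.val + 1) {p q : Fin m} (h : ¬(p = a ∧ q = b))
    (h' : ¬(p = b ∧ q = a)) : Equiv.swap a b p < Equiv.swap a b q ↔ p < q := by
  simp only [Fin.ext_iff] at h h'
  simp only [Equiv.swap_apply_def, Fin.lt_def, Fin.ext_iff]
  split_ifs <;> omega

end Swap

section Area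

variable {n : ℕ} (f : Fin (2 * n) → Bool) {a b : Fin (2 * n)}

lemma areaAbove_eq_areaAbove_comp_swap_add_one (hab : b.val = a.val + 1) (ha : f a = false)
    (hb : f b = true) : areaAbove f = areaAbove (f ∘ Equiv.swap a b) + 1 := by
  have hlt : a < b := by rw [Fin.lt_def]; omega
  rw [areaAbove, areaAbove, ← card_erase_add_one (s := filter _ _) (a := (a, b))
    (by simp [hlt, ha, hb])]
  congr 1
  refine card_equiv ((Equiv.swap a b).prodCongr (Equiv.swap a b)) fun ⟨p, q⟩ => ?_
  simp only [mem_erase, mem_filter, mem_univ, true_and, ne_eq, Prod.mk.injEq,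
    Equiv.prodCongr_apply, Prod.map, Function.comp_apply, Equiv.swap_apply_self]
  by_cases hpq : p = a ∧ q = b
  · obtain ⟨rfl, rfl⟩ := hpq
    simp [hlt.not_gt]
  by_cases hqp : p = b ∧ q = a
  · obtain ⟨rfl, rfl⟩ := hqp
    simp [hb]
  rw [swap_lt_swap_iff hab hpq hqp]
  simp [hpq]

lemma even_areaAbove_comp_swap_iff (hab : b.val = a.val + 1) (hne : f a ≠ f b) :
    Even (areaAbove (f ∘ Equiv.swap a b)) ↔ ¬Even (areaAbove f) := by
  cases ha : f a
  · rw [areaAbove_eq_areaAbove_comp_swap_add_one f hab ha (by simpa [ha] using hne.symm),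
      Nat.even_add_one, not_not]
  · have hswap := areaAbove_eq_areaAbove_comp_swap_add_one (f ∘ Equiv.swap a b) hab
      (by simpa [ha] using hne.symm) (by simpa using ha)
    rw [comp_swap_comp_swap] at hswap
    rw [hswap, Nat.even_add_one]

end Area

section Corner

variable (f : Fin m → Bool)

/-- Steps `a` and `b` run along two sides of the X-marked square in column `x + 1`, row `y + 1`,
where `(x, y)` is the start of step `a`. -/
def IsXCorner (a b : Fin m) : Prop :=
  b.val = a.val + 1 ∧ Odd (stepsBefore f true a) ∧ Even (stepsBefore f false a) ∧ f a ≠ f b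

def IsFirstXCorner (a b : Fin m) : Prop :=
  IsXCorner f a b ∧ ∀ a' b', IsXCorner f a' b' → a ≤ a'

variable {f} {a b : Fin m}

lemma IsXCorner.stepsUpTo_eq_stepsBefore_add_one (h : IsXCorner f a b) (c : Bool) :
    stepsUpTo f c b = stepsBefore f c a + 1 := by
  have hne := h.2.2.2
  rw [stepsUpTo_eq, stepsBefore_succ f c h.1, add_assoc]
  congr 1
  cases hfa : f a <;> cases hfb : f b <;> cases c <;> simp_all

lemma IsXCorner.odd (h : IsXCorner f a b) : Odd a.val := by
  rw [← stepsBefore_true_add_false f a]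
  exact h.2.1.add_even h.2.2.1

lemma IsFirstXCorner.unique {a' b' : Fin m} (h : IsFirstXCorner f a b)
    (h' : IsFirstXCorner f a' b') : a = a' ∧ b = b' := by
  have ha : a = a' := le_antisymm (h.2 a' b' h'.1) (h'.2 a b h.1)
  refine ⟨ha, Fin.ext ?_⟩
  rw [h.1.1, h'.1.1, ha]

lemma exists_isFirstXCorner (h : ∃ a b, IsXCorner f a b) : ∃ a b, IsFirstXCorner f a b := by
  obtain ⟨a, ⟨b, hab⟩, hmin⟩ :=
    WellFounded.has_min wellFounded_lt {a | ∃ b, IsXCorner f a b} (h.imp fun _ => id)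
  exact ⟨a, b, hab, fun a' b' h' => not_lt.mp (hmin a' ⟨b', h'⟩)⟩

lemma IsXCorner.comp_swap (h : IsXCorner f a b) : IsXCorner (f ∘ Equiv.swap a b) a b := by
  obtain ⟨hab, hx, hy, hne⟩ := h
  have hle : a ≤ b := by rw [Fin.le_def]; omega
  refine ⟨hab, ?_, ?_, ?_⟩
  · rwa [stepsBefore_comp_swap f true le_rfl hle]
  · rwa [stepsBefore_comp_swap f false le_rfl hle]
  · simpa using hne.symm

lemma IsFirstXCorner.comp_swap (h : IsFirstXCorner f a b) :
    IsFirstXCorner (f ∘ Equiv.swap a b) a b := by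
  refine ⟨h.1.comp_swap, fun a' b' h' => not_lt.mp fun ha' => ?_⟩
  -- corners start at odd indices, so `a'` cannot be `a - 1`
  have hb' : b'.val < a.val := by
    obtain ⟨k, hk⟩ := h'.odd
    obtain ⟨l, hl⟩ := h.1.odd
    have := h'.1
    rw [Fin.lt_def] at ha'
    omega
  have hab := h.1.1
  have hb : a < b := by rw [Fin.lt_def]; omega
  have hfix : ∀ u : Fin m, u.val ≤ b'.val → (f ∘ Equiv.swap a b) u = f u := fun u hu => by
    rw [Function.comp_apply, Equiv.swap_apply_of_ne_of_ne] <;> rw [Ne, Fin.ext_iff] <;> omega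
  obtain ⟨hab', hx, hy, hne⟩ := h'
  refine (not_lt.mpr (h.2 a' b' ⟨hab', ?_, ?_, ?_⟩)) ha'
  · rwa [stepsBefore_comp_swap f true ha'.le (ha'.trans hb).le] at hx
  · rwa [stepsBefore_comp_swap f false ha'.le (ha'.trans hb).le] at hy
  · rwa [hfix a' (by omega), hfix b' le_rfl] at hne

end Corner

open Classical in
noncomputable def xFlip (f : Fin m → Bool) : Fin m → Bool :=
  if h : ∃ a b, IsFirstXCorner f a b then f ∘ Equiv.swap h.choose h.choose_spec.choose else f

lemma xFlip_eq {f : Fin m → Bool} {a b : Fin m} (h : IsFirstXCorner f a b) :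
    xFlip f = f ∘ Equiv.swap a b := by
  have hex : ∃ a b, IsFirstXCorner f a b := ⟨a, b, h⟩
  obtain ⟨rfl, rfl⟩ := hex.choose_spec.choose_spec.unique h
  simp only [xFlip, dif_pos hex]

lemma xFlip_xFlip {f : Fin m → Bool} {a b : Fin m} (h : IsFirstXCorner f a b) :
    xFlip (xFlip f) = f := by
  rw [xFlip_eq h, xFlip_eq h.comp_swap, comp_swap_comp_swap]

section Dyck

variable {n : ℕ} {f : Fin (2 * n) → Bool} {a b : Fin (2 * n)}

lemma card_false_of_mem_dyckSet (hf : f ∈ dyckSet n) : #{v | f v = false} = n := by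
  have hsplit := card_filter_add_card_filter_not (s := univ) (p := fun v => f v = true)
  simp only [Bool.not_eq_true, card_univ, Fintype.card_fin, (mem_dyckSet.mp hf).1] at hsplit
  omega

lemma stepsUpTo_le_of_mem_dyckSet (hf : f ∈ dyckSet n) (c : Bool) (u : Fin (2 * n)) :
    stepsUpTo f c u ≤ n := by
  have hc : #{v | f v = c} = n := by
    cases c
    · exact card_false_of_mem_dyckSet hf
    · exact (mem_dyckSet.mp hf).1
  exact (card_le_card (monotone_filter_right _ fun _ _ => And.right)).trans_eq hc

lemma IsXCorner.stepsBefore_false_lt_true (hf : f ∈ dyckSet n) (h : IsXCorner f a b) :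
    stepsBefore f false a < stepsBefore f true a := by
  have hdyck := (mem_dyckSet.mp hf).2 b
  rw [h.stepsUpTo_eq_stepsBefore_add_one, h.stepsUpTo_eq_stepsBefore_add_one] at hdyck
  obtain ⟨k, hk⟩ := h.2.1
  obtain ⟨l, hl⟩ := h.2.2.1
  omega

lemma IsXCorner.comp_swap_mem_dyckSet (hf : f ∈ dyckSet n) (h : IsXCorner f a b) :
    f ∘ Equiv.swap a b ∈ dyckSet n := by
  have hab : a ≤ b := by rw [Fin.le_def]; have := h.1; omega
  refine mem_dyckSet.mpr ⟨?_, fun u => ?_⟩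
  · exact (card_equiv (Equiv.swap a b) fun v => by simp).trans (mem_dyckSet.mp hf).1
  obtain rfl | hu := eq_or_ne u a
  · have hlt := h.stepsBefore_false_lt_true hf
    simp only [stepsUpTo_eq, stepsBefore_comp_swap f _ le_rfl hab, Function.comp_apply,
      Equiv.swap_apply_left]
    cases f b <;> simp <;> omega
  · rw [stepsUpTo_comp_swap f h.1 _ hu, stepsUpTo_comp_swap f h.1 _ hu]
    exact (mem_dyckSet.mp hf).2 u

lemma IsXCorner.touchesXSquare (hf : f ∈ dyckSet n) (h : IsXCorner f a b) :
    TouchesXSquare n f := by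
  have hxn := stepsUpTo_le_of_mem_dyckSet hf true b
  have hyn := stepsUpTo_le_of_mem_dyckSet hf false b
  rw [h.stepsUpTo_eq_stepsBefore_add_one] at hxn hyn
  obtain ⟨hab, hx, hy, hne⟩ := h
  refine ⟨_, mem_Icc.mpr ⟨by omega, hxn⟩, _, mem_Icc.mpr ⟨by omega, hyn⟩, hx.add_one,
    hy.add_one, ?_⟩
  have hba : a ≠ b := by rw [Ne, Fin.ext_iff]; omega
  refine (card_pair hba).symm.le.trans (card_le_card fun v hv => ?_)
  have hpb (c : Bool) := stepsBefore_succ f c hab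
  simp only [mem_filter, mem_univ, true_and, pathPoint_eq, squareEdges, mem_insert,
    mem_singleton, add_tsub_cancel_right] at hv ⊢
  obtain rfl | rfl := hv
  · cases f v <;> simp
  · rw [hpb true, hpb false]
    cases hfa : f a <;> cases hfv : f v <;> simp_all

lemma isXCorner_of_mem_squareEdges {i j : ℕ} (hi : 0 < i) (hie : Even i) (hjo : Odd j)
    (hab : a < b) (ha : (pathPoint f a, f a) ∈ squareEdges i j)
    (hb : (pathPoint f b, f b) ∈ squareEdges i j) : IsXCorner f a b := by
  have hsa := stepsBefore_true_add_false f a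
  have hsb := stepsBefore_true_add_false f b
  have hpb (c : Bool) := stepsBefore_succ f c (a := a) (b := b)
  rw [Fin.lt_def] at hab
  rw [Nat.even_iff] at hie
  rw [Nat.odd_iff] at hjo
  simp only [IsXCorner, Nat.odd_iff, Nat.even_iff]
  simp only [squareEdges, pathPoint_eq, mem_insert, mem_singleton, Prod.mk.injEq] at ha hb
  -- the edges of the square start on the antidiagonals `x + y = i + j - 2` and `i + j - 1`,
  -- and a step starting at `(x, y)` has index `x + y`; hence `b = a + 1`
  cases hfa : f a <;> cases hfb : f b <;> simp only [hfa, hfb] at ha hb hpb ⊢ <;>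
    simp only [and_true, and_false, or_false, false_or, reduceCtorEq, ne_eq,
      not_false_eq_true, not_true_eq_false] at ha hb hpb ⊢ <;>
    have hsucc : b.val = a.val + 1 := (by omega) <;>
    simp only [hpb _ hsucc, reduceIte, Bool.true_eq_false, Bool.false_eq_true] at hb <;> omega

lemma exists_isXCorner_of_touchesXSquare (h : TouchesXSquare n f) : ∃ a b, IsXCorner f a b := by
  obtain ⟨i, hi, j, -, hie, hjo, htwo⟩ := h
  obtain ⟨a, ha, b, hb, hab⟩ := one_lt_card.mp htwo
  rw [mem_filter] at ha hb
  have hi : 0 < i := (mem_Icc.mp hi).1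
  rcases hab.lt_or_gt with hab | hab
  · exact ⟨a, b, isXCorner_of_mem_squareEdges hi hie hjo hab ha.2 hb.2⟩
  · exact ⟨b, a, isXCorner_of_mem_squareEdges hi hie hjo hab hb.2 ha.2⟩

end Dyck

end LatticePath

open LatticePath

theorem stmt19_general (n : ℕ) :
    ((dyckSet n).filter (fun f =>
        TouchesXSquare n f ∧ Even (areaAbove f))).card =
      ((dyckSet n).filter (fun f =>
        TouchesXSquare n f ∧ ¬ Even (areaAbove f))).card := by
  refine card_filter_and_eq_card_filter_and_not_of_involution xFlip fun f hf hX => ?_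
  obtain ⟨a, b, h⟩ := exists_isFirstXCorner (exists_isXCorner_of_touchesXSquare hX)
  have hdyck := h.1.comp_swap_mem_dyckSet hf
  refine ⟨?_, ?_, ?_, xFlip_xFlip h⟩ <;> rw [xFlip_eq h]
  · exact hdyck
  · exact h.1.comp_swap.touchesXSquare hdyck
  · exact even_areaAbove_comp_swap_iff f h.1.1 h.1.2.2.2

/-- Mark with an X every square in an even-indexed column and odd-indexed row. Then among
Dyck paths in the `n × n` grid touching two edges of some X-marked square, the number with
even area above the path equals the number with odd area above the path. -/
theorem stmt19 (n : ℕ) (hn : 1 ≤ n) :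
    ((dyckSet n).filter (fun f =>
        TouchesXSquare n f ∧ Even (areaAbove f))).card =
      ((dyckSet n).filter (fun f =>
        TouchesXSquare n f ∧ ¬ Even (areaAbove f))).card :=
  stmt19_general n
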